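/- arXiv:2503.23780 — 3 statements merged into one kernel-verified Lean document; each statement's English description precedes it below -/
import Mathlib

section
/- Let s, t ∈ ℂ satisfy t² = s⁶ − 4s⁵ − 10s³ − 4s + 1, with s ≠ 1, s ≠ 0 and s² + s + 2 ≠ 0. Define S = (s+1)/(s−1) and T = (s³ − s² + s − 1 + t)/(s(s² + s + 2)). Then S ≠ 1, and moreover (S+1)/(S−1) = s and 2(−2 − 2S² + T + S²T + 2S³T)/(S−1)³ = t; that is, the map (s,t) ↦ (S,T) and the map (S,T) ↦ ((S+1)/(S−1), 2(−2 − 2S² + T + S²T + 2S³T)/(S−1)³) are mutually inverse where defined. -/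
/-!
The substitution `S = (s + 1)/(s - 1)` is a Möbius involution, which gives `S ≠ 1` and the
inverse `s = (S + 1)/(S - 1)`. For the second coordinate, one computes
`1 + S² + 2S³ = 4 s (s² + s + 2)/(s - 1)³`, so the denominator of `T` cancels and
`T (1 + S² + 2S³) = 4 (s³ - s² + s - 1 + t)/(s - 1)³`, while `2 + 2S² = 4 (s² + 1)/(s - 1)²`.
Since `(s² + 1)(s - 1) = s³ - s² + s - 1`, the difference is `4t/(s - 1)³`, and
`(S - 1)³ = 8/(s - 1)³` recovers `t`.
-/

namespace Cayley

variable {K : Type*} [Field K]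

def cayley (s : K) : K := (s + 1) / (s - 1)

theorem cayley_sub_one {s : K} (hs : s ≠ 1) : cayley s - 1 = 2 / (s - 1) := by
  have : s - 1 ≠ 0 := sub_ne_zero.mpr hs
  unfold cayley
  field_simp
  ring

theorem cayley_ne_one {s : K} (h2 : (2 : K) ≠ 0) (hs : s ≠ 1) : cayley s ≠ 1 := by
  rw [← sub_ne_zero, cayley_sub_one hs]
  exact div_ne_zero h2 (sub_ne_zero.mpr hs)

theorem cayley_cayley {s : K} (h2 : (2 : K) ≠ 0) (hs : s ≠ 1) : cayley (cayley s) = s := by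
  have hs' : s - 1 ≠ 0 := sub_ne_zero.mpr hs
  have hS : cayley s - 1 ≠ 0 := sub_ne_zero.mpr (cayley_ne_one h2 hs)
  rw [cayley, div_eq_iff hS, cayley_sub_one hs, cayley]
  field_simp
  ring

theorem two_add_two_mul_cayley_sq {s : K} (hs : s ≠ 1) :
    2 + 2 * cayley s ^ 2 = 4 * (s ^ 2 + 1) / (s - 1) ^ 2 := by
  have : s - 1 ≠ 0 := sub_ne_zero.mpr hs
  unfold cayley
  field_simp
  ring

theorem one_add_cayley_sq_add_two_mul_cayley_cube {s : K} (hs : s ≠ 1) :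
    1 + cayley s ^ 2 + 2 * cayley s ^ 3 = 4 * s * (s ^ 2 + s + 2) / (s - 1) ^ 3 := by
  have : s - 1 ≠ 0 := sub_ne_zero.mpr hs
  unfold cayley
  field_simp
  ring

theorem inverse_second_coordinate {s t : K} (h2 : (2 : K) ≠ 0) (hs1 : s ≠ 1) (hs0 : s ≠ 0)
    (hs2 : s ^ 2 + s + 2 ≠ 0) :
    let S := cayley s
    let T := (s ^ 3 - s ^ 2 + s - 1 + t) / (s * (s ^ 2 + s + 2))
    2 * (-2 - 2 * S ^ 2 + T + S ^ 2 * T + 2 * S ^ 3 * T) / (S - 1) ^ 3 = t := by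
  intro S T
  have hs1' : s - 1 ≠ 0 := sub_ne_zero.mpr hs1
  have hT : T * (1 + S ^ 2 + 2 * S ^ 3) = 4 * (s ^ 3 - s ^ 2 + s - 1 + t) / (s - 1) ^ 3 := by
    rw [one_add_cayley_sq_add_two_mul_cayley_cube hs1, div_mul_div_comm, mul_assoc 4,
      mul_left_comm, mul_comm (s * _), ← mul_assoc, mul_div_mul_right _ _ (mul_ne_zero hs0 hs2)]
  calc 2 * (-2 - 2 * S ^ 2 + T + S ^ 2 * T + 2 * S ^ 3 * T) / (S - 1) ^ 3
      = 2 * (T * (1 + S ^ 2 + 2 * S ^ 3) - (2 + 2 * S ^ 2)) / (S - 1) ^ 3 := by ring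
    _ = 2 * (4 * (s ^ 3 - s ^ 2 + s - 1 + t) / (s - 1) ^ 3 - 4 * (s ^ 2 + 1) / (s - 1) ^ 2)
          / (2 / (s - 1)) ^ 3 := by
        rw [hT, two_add_two_mul_cayley_sq hs1, cayley_sub_one hs1]
    _ = t := by
        field_simp
        ring

end Cayley

open Cayley in
theorem hyperelliptic_ST_inverse_general (s t : ℂ)
    (hs1 : s ≠ 1) (hs0 : s ≠ 0) (hs2 : s ^ 2 + s + 2 ≠ 0) :
    let S : ℂ := (s + 1) / (s - 1)
    let T : ℂ := (s ^ 3 - s ^ 2 + s - 1 + t) / (s * (s ^ 2 + s + 2))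
    S ≠ 1 ∧
    (S + 1) / (S - 1) = s ∧
    2 * (-2 - 2 * S ^ 2 + T + S ^ 2 * T + 2 * S ^ 3 * T) / (S - 1) ^ 3 = t :=
  ⟨cayley_ne_one two_ne_zero hs1, cayley_cayley two_ne_zero hs1,
    inverse_second_coordinate two_ne_zero hs1 hs0 hs2⟩

/-- the maps `(s,t) ↦ (S,T)` and `(S,T) ↦ (s,t)` between the hyperelliptic
model of `X₀(50)` and the `(S,T)`-curve are mutually inverse where defined. -/
theorem hyperelliptic_ST_inverse (s t : ℂ)
    (h : t ^ 2 = s ^ 6 - 4 * s ^ 5 - 10 * s ^ 3 - 4 * s + 1)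
    (hs1 : s ≠ 1) (hs0 : s ≠ 0) (hs2 : s ^ 2 + s + 2 ≠ 0) :
    let S : ℂ := (s + 1) / (s - 1)
    let T : ℂ := (s ^ 3 - s ^ 2 + s - 1 + t) / (s * (s ^ 2 + s + 2))
    S ≠ 1 ∧
    (S + 1) / (S - 1) = s ∧
    2 * (-2 - 2 * S ^ 2 + T + S ^ 2 * T + 2 * S ^ 3 * T) / (S - 1) ^ 3 = t :=
  hyperelliptic_ST_inverse_general s t hs1 hs0 hs2
end

section
/- For (x₁,…,x₅) ∈ ℂ⁵ with all coordinates nonzero, let T(x₁,…,x₅) = x₁x₂x₃x₄/x₅⁴, let ρ be the 5-cycle (1 2 3 4 5) and κ the transposition (1 2) acting on indices, and for a permutation σ set (σ·T)(x₁,…,x₅) = T(x_{σ(1)},…,x_{σ(5)}). Define t(x₁,…,x₅) = Σ_{i=1}^{5} (ρⁱ·T)(x₁,…,x₅) + Σ_{i=1}^{5} ((κρⁱ)·T)(x₁,…,x₅). Then t is invariant under the full symmetric group S₅: for every permutation σ of {1,…,5} and every (x₁,…,x₅) ∈ ℂ⁵ with all coordinates nonzero, t(x_{σ(1)},…,x_{σ(5)})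 = t(x₁,…,x₅). -/
open Finset

/-- `T(x₁,…,x₅) = x₁x₂x₃x₄ / x₅⁴` (zero-indexed). -/
noncomputable def bringT (x : Fin 5 → ℂ) : ℂ :=
  x 0 * x 1 * x 2 * x 3 / (x 4) ^ 4

/-- The 5-cycle `ρ = (1 2 3 4 5)`. -/
def bringRho : Equiv.Perm (Fin 5) := finRotate 5

/-- The transposition `κ = (1 2)`. -/
def bringKappa : Equiv.Perm (Fin 5) := Equiv.swap 0 1

/-- `t = Σ_{i=1}^{5} (ρⁱ·T) + Σ_{i=1}^{5} ((κρⁱ)·T)`, where `(σ·T)(x) = T(x ∘ σ)`. -/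
noncomputable def bringt (x : Fin 5 → ℂ) : ℂ :=
  (∑ i ∈ Icc 1 5, bringT (x ∘ ⇑(bringRho ^ i))) +
  (∑ i ∈ Icc 1 5, bringT (x ∘ ⇑(bringKappa * bringRho ^ i)))

/-! Every term of `t` has the form `T(x ∘ τ) = (∏ᵢ xᵢ) / x_{τ(5)}⁵`. As `i` runs over `1, …, 5`,
both `ρⁱ(5)` and `κρⁱ(5)` run once over all five indices, so `t = 2 Σⱼ (∏ᵢ xᵢ) / xⱼ⁵`, which is
visibly symmetric. -/

open Fin.NatCast

theorem div_pow_eq_mul_div_pow_succ {G₀ : Type*} [GroupWithZero G₀] (a b : G₀) {n : ℕ}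
    (hn : n ≠ 0) : a / b ^ n = a * b / b ^ (n + 1) := by
  rcases eq_or_ne b 0 with rfl | hb
  · simp [hn]
  · rw [pow_succ, mul_div_mul_right _ _ hb]

theorem finRotate_pow_apply {n : ℕ} [NeZero n] (i : ℕ) (k : Fin n) :
    (finRotate n ^ i) k = k + (i : Fin n) := by
  induction i with
  | zero => simp
  | succ i ih => rw [pow_succ', Equiv.Perm.mul_apply, ih, finRotate_apply, Nat.cast_succ, add_assoc]

theorem sum_Icc_finRotate_pow_apply {M : Type*} [AddCommMonoid M] {n : ℕ} (f : Fin n → M)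
    (k : Fin n) : ∑ i ∈ Icc 1 n, f ((finRotate n ^ i) k) = ∑ j, f j := by
  have := k.neZero
  calc ∑ i ∈ Icc 1 n, f ((finRotate n ^ i) k)
      = ∑ i ∈ range n, f (k + ((i + 1 : ℕ) : Fin n)) := by
        rw [range_eq_Ico, sum_Ico_add' (fun i : ℕ ↦ f (k + (i : Fin n)))]
        simp_rw [finRotate_pow_apply]
        rfl
    _ = ∑ j : Fin n, f (j + (k + 1)) := by
        rw [← Fin.sum_univ_eq_sum_range (fun i : ℕ ↦ f (k + ((i + 1 : ℕ) : Fin n)))]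
        simp only [Nat.cast_succ, Fin.cast_val_eq_self]
        exact sum_congr rfl fun j _ ↦ by rw [add_left_comm]
    _ = ∑ j, f j := Equiv.sum_comp (Equiv.addRight (k + 1)) f

theorem bringT_comp (x : Fin 5 → ℂ) (τ : Equiv.Perm (Fin 5)) :
    bringT (x ∘ τ) = (∏ i, x i) / x (τ 4) ^ 5 := by
  rw [← Equiv.prod_comp τ, Fin.prod_univ_five, bringT, div_pow_eq_mul_div_pow_succ _ _ four_ne_zero]
  rfl

theorem bringt_eq_two_mul_sum (x : Fin 5 → ℂ) :
    bringt x = 2 * ∑ j, (∏ i, x i) / x j ^ 5 := by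
  have hκ : ∑ j, (∏ i, x i) / x (bringKappa j) ^ 5 = ∑ j, (∏ i, x i) / x j ^ 5 :=
    Equiv.sum_comp bringKappa (fun j ↦ (∏ i, x i) / x j ^ 5)
  simp only [bringt, bringT_comp, Equiv.Perm.mul_apply, bringRho,
    sum_Icc_finRotate_pow_apply (fun j ↦ (∏ i, x i) / x j ^ 5),
    sum_Icc_finRotate_pow_apply (fun j ↦ (∏ i, x i) / x (bringKappa j) ^ 5), hκ]
  ring

/-- the function `t` is invariant under the full symmetric group `S₅`
acting by permutation of the coordinates. -/
theorem bringt_S5_invariant :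
    ∀ σ : Equiv.Perm (Fin 5), ∀ x : Fin 5 → ℂ, (∀ i, x i ≠ 0) →
      bringt (x ∘ ⇑σ) = bringt x := by
  intro σ x _
  rw [bringt_eq_two_mul_sum, bringt_eq_two_mul_sum]
  simp only [Function.comp_apply, Equiv.prod_comp σ x,
    Equiv.sum_comp σ (fun j ↦ (∏ i, x i) / x j ^ 5)]
end

section
/- Let x₁, y₁, z₁ ∈ ℂ satisfy F(x₁,y₁,z₁) = x₁(y₁⁵+z₁⁵) + x₁²y₁²z₁² − x₁⁴y₁z₁ − 2y₁³z₁³ = 0. Define x = (z₁−y₁)(x₁² + x₁y₁ + y₁² + x₁z₁ + z₁²), y = (y₁−z₁)(−x₁² + x₁y₁ + y₁² + x₁z₁ + 2y₁z₁ + z₁²), z = (y₁+z₁)(−x₁² + y₁z₁), and w = x₁y₁² − y₁³ + x₁z₁² − z₁³. Then −(x²+y²) + 2(z²+w²) = 0 and x³ + xy² + 2y³ − 4xz² − 8xzw = 0. -/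
/-! Both equations of `X(Γ_B)^alg` pull back under `ψ` to multiples of the sextic `F`: the quadric
to `-8 F` and the cubic to `16 (y₁ - z₁)(y₁ z₁ - x₁²) F`. These are polynomial identities, valid in
every commutative ring. -/

section

variable {R : Type*} [CommRing R]

def hulekCraigSextic (x₁ y₁ z₁ : R) : R :=
  x₁ * (y₁ ^ 5 + z₁ ^ 5) + x₁ ^ 2 * y₁ ^ 2 * z₁ ^ 2 - x₁ ^ 4 * y₁ * z₁ - 2 * y₁ ^ 3 * z₁ ^ 3

def xGammaBQuadric : R × R × R × R → R
  | (x, y, z, w) => -(x ^ 2 + y ^ 2) + 2 * (z ^ 2 + w ^ 2)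

def xGammaBCubic : R × R × R × R → R
  | (x, y, z, w) => x ^ 3 + x * y ^ 2 + 2 * y ^ 3 - 4 * x * z ^ 2 - 8 * x * z * w

def hulekCraigToXGammaB (x₁ y₁ z₁ : R) : R × R × R × R :=
  ((z₁ - y₁) * (x₁ ^ 2 + x₁ * y₁ + y₁ ^ 2 + x₁ * z₁ + z₁ ^ 2),
   (y₁ - z₁) * (-x₁ ^ 2 + x₁ * y₁ + y₁ ^ 2 + x₁ * z₁ + 2 * y₁ * z₁ + z₁ ^ 2),
   (y₁ + z₁) * (-x₁ ^ 2 + y₁ * z₁),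
   x₁ * y₁ ^ 2 - y₁ ^ 3 + x₁ * z₁ ^ 2 - z₁ ^ 3)

theorem xGammaBQuadric_hulekCraigToXGammaB (x₁ y₁ z₁ : R) :
    xGammaBQuadric (hulekCraigToXGammaB x₁ y₁ z₁) = -8 * hulekCraigSextic x₁ y₁ z₁ := by
  simp only [xGammaBQuadric, hulekCraigToXGammaB, hulekCraigSextic]
  ring

theorem xGammaBCubic_hulekCraigToXGammaB (x₁ y₁ z₁ : R) :
    xGammaBCubic (hulekCraigToXGammaB x₁ y₁ z₁) =
      16 * (y₁ - z₁) * (y₁ * z₁ - x₁ ^ 2) * hulekCraigSextic x₁ y₁ z₁ := by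
  simp only [xGammaBCubic, hulekCraigToXGammaB, hulekCraigSextic]
  ring

end

/-- the polynomial map `ψ` carries the singular plane model of
Hulek–Craig's curve into `X(Γ_B)^alg`. -/
theorem hulekCraig_to_xgammaB (x₁ y₁ z₁ : ℂ)
    (hF : x₁ * (y₁ ^ 5 + z₁ ^ 5) + x₁ ^ 2 * y₁ ^ 2 * z₁ ^ 2 - x₁ ^ 4 * y₁ * z₁
      - 2 * y₁ ^ 3 * z₁ ^ 3 = 0) :
    let x : ℂ := (z₁ - y₁) * (x₁ ^ 2 + x₁ * y₁ + y₁ ^ 2 + x₁ * z₁ + z₁ ^ 2);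
    let y : ℂ := (y₁ - z₁) * (-x₁ ^ 2 + x₁ * y₁ + y₁ ^ 2 + x₁ * z₁ + 2 * y₁ * z₁ + z₁ ^ 2);
    let z : ℂ := (y₁ + z₁) * (-x₁ ^ 2 + y₁ * z₁);
    let w : ℂ := x₁ * y₁ ^ 2 - y₁ ^ 3 + x₁ * z₁ ^ 2 - z₁ ^ 3;
    -(x ^ 2 + y ^ 2) + 2 * (z ^ 2 + w ^ 2) = 0 ∧
    x ^ 3 + x * y ^ 2 + 2 * y ^ 3 - 4 * x * z ^ 2 - 8 * x * z * w = 0 := by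
  change hulekCraigSextic x₁ y₁ z₁ = 0 at hF
  have hQ := xGammaBQuadric_hulekCraigToXGammaB x₁ y₁ z₁
  have hC := xGammaBCubic_hulekCraigToXGammaB x₁ y₁ z₁
  rw [hF, mul_zero] at hQ hC
  exact ⟨hQ, hC⟩
end
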